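/- arXiv:2209.14761 — 2 statements merged into one kernel-verified Lean document; each statement's English description precedes it below -/
import Mathlib

section
/- Let G_C be the controllability Gramian of a stable, controllable LTI system with Cholesky factorization G_C = U Uᵀ (U invertible), and let Uᵀ G_O U = K Σ² Kᵀ be an eigenvalue decomposition with K orthogonal and Σ diagonal with positive diagonal entries. Then for T = Σ^{1/2} Kᵀ U⁻¹, the transformed Gramians satisfy T G_C Tᵀ = Σ and T⁻ᵀ G_O T⁻¹ = Σ. -/
/-!
With `T = S Kᵀ U⁻¹` one has `T⁻¹ = U K S⁻¹`, since `Kᵀ K = 1`. Hence `T (U Uᵀ) Tᵀ = S Sᵀ` and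
`T⁻ᵀ G_O T⁻¹ = S⁻ᵀ (Kᵀ Uᵀ G_O U K) S⁻¹ = S⁻ᵀ Σ² S⁻¹`, and for `S = Σ^{1/2}` diagonal both equal `Σ`.
-/

open Matrix

namespace Matrix

section Balancing

variable {n R : Type*} [Fintype n] [DecidableEq n] [CommRing R] {S K U : Matrix n n R}

theorem conj_mul_self_transpose_eq_mul_transpose (hU : IsUnit U.det) (hK : Kᵀ * K = 1) :
    (S * Kᵀ * U⁻¹) * (U * Uᵀ) * (S * Kᵀ * U⁻¹)ᵀ = S * Sᵀ := by
  have hUT : IsUnit Uᵀ.det := by rwa [det_transpose]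
  calc (S * Kᵀ * U⁻¹) * (U * Uᵀ) * (S * Kᵀ * U⁻¹)ᵀ
      = S * Kᵀ * (U⁻¹ * U) * (Uᵀ * Uᵀ⁻¹) * K * Sᵀ := by
        simp only [transpose_mul, transpose_nonsing_inv, transpose_transpose, Matrix.mul_assoc]
    _ = S * Sᵀ := by
        rw [nonsing_inv_mul U hU, mul_nonsing_inv Uᵀ hUT, Matrix.mul_one, Matrix.mul_one,
          Matrix.mul_assoc S, hK, Matrix.mul_one]

theorem inv_mul_transpose_mul_inv (hU : IsUnit U.det) (hK : Kᵀ * K = 1) :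
    (S * Kᵀ * U⁻¹)⁻¹ = U * K * S⁻¹ := by
  rw [mul_inv_rev, mul_inv_rev, nonsing_inv_nonsing_inv U hU, inv_eq_right_inv hK,
    Matrix.mul_assoc]

theorem inv_transpose_conj_eq_of_transpose_conj_eq {G M : Matrix n n R} (hU : IsUnit U.det)
    (hK : Kᵀ * K = 1) (hEig : Uᵀ * G * U = K * M * Kᵀ) :
    ((S * Kᵀ * U⁻¹)⁻¹)ᵀ * G * (S * Kᵀ * U⁻¹)⁻¹ = (S⁻¹)ᵀ * M * S⁻¹ := by
  rw [inv_mul_transpose_mul_inv hU hK]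
  calc (U * K * S⁻¹)ᵀ * G * (U * K * S⁻¹)
      = (S⁻¹)ᵀ * Kᵀ * (Uᵀ * G * U) * K * S⁻¹ := by
        simp only [transpose_mul, Matrix.mul_assoc]
    _ = (S⁻¹)ᵀ * (Kᵀ * K) * M * (Kᵀ * K) * S⁻¹ := by
        rw [hEig]; simp only [Matrix.mul_assoc]
    _ = (S⁻¹)ᵀ * M * S⁻¹ := by rw [hK, Matrix.mul_one, Matrix.mul_one]

end Balancing

section DiagonalSqrt

variable {n : Type*} [Fintype n] [DecidableEq n]

theorem inv_diagonal_of_ne_zero {K : Type*} [Field K] {d : n → K} (hd : ∀ i, d i ≠ 0) :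
    (diagonal d)⁻¹ = diagonal d⁻¹ := by
  refine inv_eq_right_inv ?_
  rw [diagonal_mul_diagonal, ← diagonal_one]
  exact congrArg diagonal (funext fun i => mul_inv_cancel₀ (hd i))

theorem diagonal_sqrt_mul_transpose {σ : n → ℝ} (hσ : ∀ i, 0 ≤ σ i) :
    diagonal (fun i => √(σ i)) * (diagonal fun i => √(σ i))ᵀ = diagonal σ := by
  rw [diagonal_transpose, diagonal_mul_diagonal]
  exact congrArg diagonal (funext fun i => Real.mul_self_sqrt (hσ i))

theorem inv_diagonal_sqrt_transpose_conj_sq {σ : n → ℝ} (hσ : ∀ i, 0 < σ i) :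
    ((diagonal fun i => √(σ i))⁻¹)ᵀ * (diagonal σ * diagonal σ) *
      (diagonal fun i => √(σ i))⁻¹ = diagonal σ := by
  rw [inv_diagonal_of_ne_zero fun i => (Real.sqrt_pos.mpr (hσ i)).ne', diagonal_transpose,
    diagonal_mul_diagonal, diagonal_mul_diagonal, diagonal_mul_diagonal]
  refine congrArg diagonal (funext fun i => ?_)
  have hne : √(σ i) ≠ 0 := (Real.sqrt_pos.mpr (hσ i)).ne'
  simp only [Pi.inv_apply]
  field_simp
  rw [Real.sq_sqrt (hσ i).le]
  ring

end DiagonalSqrt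

end Matrix

theorem balancing_transformation_general {n : ℕ}
    (GC GO U K Sig : Matrix (Fin n) (Fin n) ℝ)
    (hU : IsUnit U.det) (hChol : GC = U * Uᵀ)
    (hK₂ : Kᵀ * K = 1)
    (hSigDiag : ∀ i j, i ≠ j → Sig i j = 0) (hSigPos : ∀ i, 0 < Sig i i)
    (hEig : Uᵀ * GO * U = K * (Sig * Sig) * Kᵀ)
    (SigHalf : Matrix (Fin n) (Fin n) ℝ)
    (hSigHalf : ∀ i j, SigHalf i j = if i = j then Real.sqrt (Sig i i) else 0) :
    (SigHalf * Kᵀ * U⁻¹) * GC * (SigHalf * Kᵀ * U⁻¹)ᵀ = Sig ∧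
    ((SigHalf * Kᵀ * U⁻¹)⁻¹)ᵀ * GO * (SigHalf * Kᵀ * U⁻¹)⁻¹ = Sig := by
  obtain ⟨σ, rfl⟩ : ∃ σ, Sig = diagonal σ := ⟨Sig.diag, (IsDiag.diagonal_diag hSigDiag).symm⟩
  simp only [diagonal_apply_eq] at hSigPos hSigHalf
  obtain rfl : SigHalf = diagonal fun i => √(σ i) := by
    ext i j
    rw [hSigHalf, diagonal_apply]
  constructor
  · rw [hChol, conj_mul_self_transpose_eq_mul_transpose hU hK₂]
    exact diagonal_sqrt_mul_transpose fun i => (hSigPos i).le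
  · rw [inv_transpose_conj_eq_of_transpose_conj_eq hU hK₂ hEig]
    exact inv_diagonal_sqrt_transpose_conj_sq hSigPos

theorem balancing_transformation {n : ℕ}
    (GC GO U K Sig : Matrix (Fin n) (Fin n) ℝ)
    (hGC : GC.PosDef) (hGO : GO.PosDef)
    (hU : IsUnit U.det) (hChol : GC = U * Uᵀ)
    (hK₁ : K * Kᵀ = 1) (hK₂ : Kᵀ * K = 1)
    (hSigDiag : ∀ i j, i ≠ j → Sig i j = 0) (hSigPos : ∀ i, 0 < Sig i i)
    (hEig : Uᵀ * GO * U = K * (Sig * Sig) * Kᵀ)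
    (SigHalf : Matrix (Fin n) (Fin n) ℝ)
    (hSigHalf : ∀ i j, SigHalf i j = if i = j then Real.sqrt (Sig i i) else 0) :
    (SigHalf * Kᵀ * U⁻¹) * GC * (SigHalf * Kᵀ * U⁻¹)ᵀ = Sig ∧
    ((SigHalf * Kᵀ * U⁻¹)⁻¹)ᵀ * GO * (SigHalf * Kᵀ * U⁻¹)⁻¹ = Sig :=
  balancing_transformation_general GC GO U K Sig hU hChol hK₂ hSigDiag hSigPos hEig SigHalf hSigHalf
end

section
/- With T = Σ^{-1/2} Vᵀ Lᵀ from the square-root algorithm (where G_C = U Uᵀ, G_O = L Lᵀ, Uᵀ L = W Σ Vᵀ an SVD with W, V orthogonal and Σ positive diagonal), one has T G_C Tᵀ = Σ and T⁻ᵀ G_O T⁻¹ = Σ; i.e., the square-root transformation balances the system. -/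
/-!
Write `T = S Vᵀ Lᵀ` with `S = Σ^{-1/2}`. Since `Lᵀ U = (Uᵀ L)ᵀ = V Σ Wᵀ`, orthogonality of `V` and `W`
collapses `T (U Uᵀ) Tᵀ` to `S Σ Σ S = Σ`. On the other side `L` cancels against `T⁻¹ = L⁻ᵀ V S⁻¹`,
leaving `T⁻ᵀ (L Lᵀ) T⁻¹ = (S Vᵀ V S)⁻¹ = (S S)⁻¹ = Σ`.
-/

open Matrix

namespace Matrix

variable {ι R : Type*} [Fintype ι] [DecidableEq ι] [CommRing R]

theorem mul_mul_transpose_mul_transpose_of_svd {U L W V D : Matrix ι ι R} (S : Matrix ι ι R)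
    (hW : Wᵀ * W = 1) (hV : Vᵀ * V = 1) (hSVD : Uᵀ * L = W * D * Vᵀ) :
    (S * Vᵀ * Lᵀ) * (U * Uᵀ) * (S * Vᵀ * Lᵀ)ᵀ = S * Dᵀ * D * Sᵀ := by
  have hLU : Lᵀ * U = V * Dᵀ * Wᵀ := by
    simpa only [transpose_mul, transpose_transpose, Matrix.mul_assoc] using congrArg transpose hSVD
  calc (S * Vᵀ * Lᵀ) * (U * Uᵀ) * (S * Vᵀ * Lᵀ)ᵀ
      = S * Vᵀ * (Lᵀ * U) * (Uᵀ * L) * V * Sᵀ := by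
        simp only [transpose_mul, transpose_transpose, Matrix.mul_assoc]
    _ = S * (Vᵀ * V) * Dᵀ * (Wᵀ * W) * D * (Vᵀ * V) * Sᵀ := by
        rw [hLU, hSVD]; simp only [Matrix.mul_assoc]
    _ = S * Dᵀ * D * Sᵀ := by simp only [hW, hV, Matrix.mul_one]

theorem transpose_inv_mul_mul_transpose_mul_inv (A : Matrix ι ι R) {L : Matrix ι ι R}
    (hL : IsUnit L.det) :
    ((A * Lᵀ)⁻¹)ᵀ * (L * Lᵀ) * (A * Lᵀ)⁻¹ = (A * Aᵀ)⁻¹ := by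
  have hLt : IsUnit Lᵀ.det := by rwa [det_transpose]
  calc ((A * Lᵀ)⁻¹)ᵀ * (L * Lᵀ) * (A * Lᵀ)⁻¹
      = A⁻¹ᵀ * (L⁻¹ * L) * (Lᵀ * Lᵀ⁻¹) * A⁻¹ := by
        simp only [mul_inv_rev, transpose_mul, transpose_nonsing_inv, transpose_transpose,
          Matrix.mul_assoc]
    _ = (A * Aᵀ)⁻¹ := by
        rw [nonsing_inv_mul L hL, mul_nonsing_inv Lᵀ hLt, mul_inv_rev, transpose_nonsing_inv,
          Matrix.mul_one, Matrix.mul_one]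

theorem mul_transpose_mul_transpose_of_transpose_mul_self (S : Matrix ι ι R) {V : Matrix ι ι R}
    (hV : Vᵀ * V = 1) : (S * Vᵀ) * (S * Vᵀ)ᵀ = S * Sᵀ := by
  rw [transpose_mul, transpose_transpose, Matrix.mul_assoc, ← Matrix.mul_assoc Vᵀ, hV,
    Matrix.one_mul]

end Matrix

section InvSqrtDiagonal

variable {ι : Type*} [Fintype ι] [DecidableEq ι] {d : ι → ℝ}

theorem inv_sqrt_mul_inv_sqrt_of_pos {x : ℝ} (hx : 0 < x) : (√x)⁻¹ * (√x)⁻¹ = x⁻¹ := by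
  rw [← mul_inv, Real.mul_self_sqrt hx.le]

theorem diagonal_inv_sqrt_mul_sq_mul_diagonal_inv_sqrt (hd : ∀ i, 0 < d i) :
    diagonal (fun i => (√(d i))⁻¹) * (diagonal d)ᵀ * diagonal d * (diagonal fun i => (√(d i))⁻¹)ᵀ
      = diagonal d := by
  simp only [diagonal_transpose, diagonal_mul_diagonal]
  congr 1
  funext i
  calc (√(d i))⁻¹ * d i * d i * (√(d i))⁻¹ = (√(d i))⁻¹ * (√(d i))⁻¹ * d i * d i := by ring
    _ = d i := by rw [inv_sqrt_mul_inv_sqrt_of_pos (hd i), inv_mul_cancel₀ (hd i).ne', one_mul]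

theorem inv_diagonal_inv_sqrt_mul_transpose (hd : ∀ i, 0 < d i) :
    (diagonal (fun i => (√(d i))⁻¹) * (diagonal fun i => (√(d i))⁻¹)ᵀ)⁻¹ = diagonal d := by
  refine inv_eq_left_inv ?_
  simp only [diagonal_transpose, diagonal_mul_diagonal, inv_sqrt_mul_inv_sqrt_of_pos (hd _),
    mul_inv_cancel₀ (hd _).ne', diagonal_one]

end InvSqrtDiagonal

theorem square_root_algorithm_balances_general {n : ℕ}
    (GC GO U L W V Sig : Matrix (Fin n) (Fin n) ℝ)
    (hL : IsUnit L.det)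
    (hCholC : GC = U * Uᵀ) (hCholO : GO = L * Lᵀ)
    (hW₂ : Wᵀ * W = 1)
    (hV₂ : Vᵀ * V = 1)
    (hSigDiag : ∀ i j, i ≠ j → Sig i j = 0) (hSigPos : ∀ i, 0 < Sig i i)
    (hSVD : Uᵀ * L = W * Sig * Vᵀ)
    (SigInvHalf : Matrix (Fin n) (Fin n) ℝ)
    (hSigInvHalf : ∀ i j,
      SigInvHalf i j = if i = j then (Real.sqrt (Sig i i))⁻¹ else 0) :
    (SigInvHalf * Vᵀ * Lᵀ) * GC * (SigInvHalf * Vᵀ * Lᵀ)ᵀ = Sig ∧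
    ((SigInvHalf * Vᵀ * Lᵀ)⁻¹)ᵀ * GO * (SigInvHalf * Vᵀ * Lᵀ)⁻¹ = Sig := by
  obtain ⟨d, rfl⟩ : ∃ d, Sig = diagonal d :=
    ⟨_, ((isDiag_iff_diagonal_diag Sig).mp fun i j => hSigDiag i j).symm⟩
  simp only [diagonal_apply_eq] at hSigPos hSigInvHalf
  obtain rfl : SigInvHalf = diagonal fun i => (√(d i))⁻¹ := by
    ext i j
    rw [hSigInvHalf, diagonal_apply]
  constructor
  · rw [hCholC, mul_mul_transpose_mul_transpose_of_svd _ hW₂ hV₂ hSVD,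
      diagonal_inv_sqrt_mul_sq_mul_diagonal_inv_sqrt hSigPos]
  · rw [hCholO, transpose_inv_mul_mul_transpose_mul_inv _ hL,
      mul_transpose_mul_transpose_of_transpose_mul_self _ hV₂,
      inv_diagonal_inv_sqrt_mul_transpose hSigPos]

theorem square_root_algorithm_balances {n : ℕ}
    (GC GO U L W V Sig : Matrix (Fin n) (Fin n) ℝ)
    (hGC : GC.PosDef) (hGO : GO.PosDef)
    (hU : IsUnit U.det) (hL : IsUnit L.det)
    (hCholC : GC = U * Uᵀ) (hCholO : GO = L * Lᵀ)
    (hW₁ : W * Wᵀ = 1) (hW₂ : Wᵀ * W = 1)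
    (hV₁ : V * Vᵀ = 1) (hV₂ : Vᵀ * V = 1)
    (hSigDiag : ∀ i j, i ≠ j → Sig i j = 0) (hSigPos : ∀ i, 0 < Sig i i)
    (hSVD : Uᵀ * L = W * Sig * Vᵀ)
    (SigInvHalf : Matrix (Fin n) (Fin n) ℝ)
    (hSigInvHalf : ∀ i j,
      SigInvHalf i j = if i = j then (Real.sqrt (Sig i i))⁻¹ else 0) :
    (SigInvHalf * Vᵀ * Lᵀ) * GC * (SigInvHalf * Vᵀ * Lᵀ)ᵀ = Sig ∧
    ((SigInvHalf * Vᵀ * Lᵀ)⁻¹)ᵀ * GO * (SigInvHalf * Vᵀ * Lᵀ)⁻¹ = Sig :=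
  square_root_algorithm_balances_general GC GO U L W V Sig hL hCholC hCholO hW₂ hV₂ hSigDiag hSigPos
    hSVD SigInvHalf hSigInvHalf
end
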